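/- arXiv:2310.00978 — 3 statements merged into one kernel-verified Lean document; each statement's English description precedes it below -/
import Mathlib

section
/- For the doubling map T(x)=2x mod 1 on [0,1] with observable v(x)=x^{-1/α} (α∈(0,1)), inducing on X=[1/2,1] with first return time R(x)=inf{n≥1: T^n x∈X}, the Birkhoff sums satisfy: for x∈X and 1≤ℓ≤R(x), v(T^ℓ x) = (x-1/2)^{-1/α} c^ℓ where c=2^{-1/α}, and hence v_ℓ(x) = v(x) + (c^{-1}-1)^{-1}(1-c^{ℓ-1})(x-1/2)^{-1/α}. -/
open Set Finset

/-- The doubling map `T x = 2x mod 1`. -/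
noncomputable def doublingT : ℝ → ℝ := fun x => Int.fract (2 * x)

/-! Up to its first return to `[1/2, 1]`, the orbit of `x ∈ [1/2, 1)` is `2^ℓ (x - 1/2)`: the first
step subtracts `1`, and every later point lies in `[0, 1/2)`, where `T` is plain doubling. Since
`v` is homogeneous of degree `-1/α`, this gives `v (T^ℓ x) = (x - 1/2)^(-1/α) c^ℓ`, and the Birkhoff
sum is `v x` plus a geometric sum. The point `x = 1` is excluded by `R 1 = 0`, as `T 1 = 0` is
fixed. -/

lemma doublingT_eq_two_mul {y : ℝ} (h0 : 0 ≤ y) (h1 : y < 1 / 2) : doublingT y = 2 * y :=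
  Int.fract_eq_self.mpr ⟨by linarith, by linarith⟩

lemma doublingT_eq_two_mul_sub_one {y : ℝ} (h0 : 1 / 2 ≤ y) (h1 : y < 1) :
    doublingT y = 2 * y - 1 := by
  rw [doublingT, ← Int.fract_sub_one, Int.fract_eq_self.mpr ⟨by linarith, by linarith⟩]

lemma doublingT_iterate_one {n : ℕ} (hn : 1 ≤ n) : doublingT^[n] 1 = 0 := by
  obtain ⟨m, rfl⟩ := Nat.exists_eq_add_of_le' hn
  have h1 : doublingT 1 = 0 := by norm_num [doublingT]
  have h0 : doublingT 0 = 0 := by simp [doublingT]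
  rw [Function.iterate_succ_apply, h1, Function.iterate_fixed h0]

lemma doublingT_iterate_eq_of_forall_notMem {x : ℝ} (hx : x ∈ Ico (1 / 2 : ℝ) 1) {n : ℕ}
    (hn : 1 ≤ n) (hout : ∀ k, 1 ≤ k → k < n → doublingT^[k] x ∉ Icc (1 / 2 : ℝ) 1) :
    doublingT^[n] x = 2 ^ n * (x - 1 / 2) := by
  induction n, hn using Nat.le_induction with
  | base =>
    rw [Function.iterate_one, doublingT_eq_two_mul_sub_one hx.1 hx.2]
    ring
  | succ m hm ih =>
    have hm_eq := ih fun k hk1 hk => hout k hk1 (by omega)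
    have hm_lt_one : doublingT^[m] x < 1 := by
      obtain ⟨k, rfl⟩ := Nat.exists_eq_add_of_le' hm
      rw [Function.iterate_succ_apply']
      exact Int.fract_lt_one _
    have hm_nonneg : 0 ≤ doublingT^[m] x := by
      rw [hm_eq]
      exact mul_nonneg (by positivity) (by linarith [hx.1])
    have hm_lt_half : doublingT^[m] x < 1 / 2 :=
      not_le.mp fun h => hout m hm (by omega) ⟨h, hm_lt_one.le⟩
    rw [Function.iterate_succ_apply', doublingT_eq_two_mul hm_nonneg hm_lt_half, hm_eq]
    ring

lemma sInf_doublingT_returns_one :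
    sInf {n : ℕ | 1 ≤ n ∧ doublingT^[n] 1 ∈ Icc (1 / 2 : ℝ) 1} = 0 := by
  have hnever : {n : ℕ | 1 ≤ n ∧ doublingT^[n] 1 ∈ Icc (1 / 2 : ℝ) 1} = ∅ :=
    eq_empty_of_forall_notMem fun n hn => by norm_num [doublingT_iterate_one hn.1] at hn
  rw [hnever, Nat.sInf_empty]

lemma doublingT_iterate_eq_of_le_sInf_returns {x : ℝ} (hx : x ∈ Ico (1 / 2 : ℝ) 1) {ℓ : ℕ}
    (h1 : 1 ≤ ℓ) (h2 : ℓ ≤ sInf {n : ℕ | 1 ≤ n ∧ doublingT^[n] x ∈ Icc (1 / 2 : ℝ) 1}) :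
    doublingT^[ℓ] x = 2 ^ ℓ * (x - 1 / 2) :=
  doublingT_iterate_eq_of_forall_notMem hx h1 fun _ hk1 hk hmem =>
    Nat.notMem_of_lt_sInf (hk.trans_le h2) ⟨hk1, hmem⟩

lemma pow_mul_rpow {a t : ℝ} (ha : 0 ≤ a) (ht : 0 ≤ t) (n : ℕ) (s : ℝ) :
    (a ^ n * t) ^ s = t ^ s * (a ^ s) ^ n := by
  rw [Real.mul_rpow (by positivity) ht, Real.rpow_pow_comm ha, mul_comm]

lemma sum_range_pow_succ {c : ℝ} (hc0 : c ≠ 0) (hc1 : c ≠ 1) (m : ℕ) :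
    ∑ j ∈ range m, c ^ (j + 1) = (c⁻¹ - 1)⁻¹ * (1 - c ^ m) := by
  have hc1' : 1 - c ≠ 0 := sub_ne_zero.mpr hc1.symm
  simp only [pow_succ, ← Finset.sum_mul, geom_sum_eq hc1]
  field_simp
  ring

theorem stmt0 (α : ℝ) (hα : α ∈ Set.Ioo (0:ℝ) 1)
    (v : ℝ → ℝ) (hv : ∀ x, v x = x ^ (-(1/α)))
    (c : ℝ) (hc : c = (2:ℝ) ^ (-(1/α)))
    (R : ℝ → ℕ)
    (hR : ∀ x, R x = sInf {n : ℕ | 1 ≤ n ∧ doublingT^[n] x ∈ Set.Icc (1/2:ℝ) 1})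
    (x : ℝ) (hx : x ∈ Set.Icc (1/2:ℝ) 1) :
    (∀ ℓ : ℕ, 1 ≤ ℓ → ℓ ≤ R x →
      v (doublingT^[ℓ] x) = (x - 1/2) ^ (-(1/α)) * c ^ ℓ) ∧
    (∀ ℓ : ℕ, 1 ≤ ℓ → ℓ ≤ R x →
      ∑ j ∈ Finset.range ℓ, v (doublingT^[j] x)
        = v x + (c⁻¹ - 1)⁻¹ * (1 - c ^ (ℓ - 1)) * (x - 1/2) ^ (-(1/α))) := by
  obtain ⟨hx_half, hx_le⟩ := hx
  rcases hx_le.lt_or_eq with hx_lt | rfl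
  swap
  · have hR1 : R 1 = 0 := (hR 1).trans sInf_doublingT_returns_one
    exact ⟨fun ℓ h1 h2 => by omega, fun ℓ h1 h2 => by omega⟩
  have part1 (ℓ : ℕ) (h1 : 1 ≤ ℓ) (h2 : ℓ ≤ R x) :
      v (doublingT^[ℓ] x) = (x - 1/2) ^ (-(1/α)) * c ^ ℓ := by
    rw [hv, doublingT_iterate_eq_of_le_sInf_returns ⟨hx_half, hx_lt⟩ h1 (hR x ▸ h2),
      pow_mul_rpow zero_le_two (by linarith), hc]
  refine ⟨part1, fun ℓ h1 h2 => ?_⟩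
  have hc0 : c ≠ 0 := by rw [hc]; positivity
  have hc1 : c ≠ 1 := by
    rw [hc]
    exact (Real.rpow_lt_one_of_one_lt_of_neg one_lt_two (by simpa using hα.1)).ne
  obtain ⟨m, rfl⟩ := Nat.exists_eq_add_of_le' h1
  rw [Finset.sum_range_succ', Function.iterate_zero_apply, Nat.add_sub_cancel,
    Finset.sum_congr rfl fun j hj => part1 (j + 1) (by omega)
      (by have := Finset.mem_range.mp hj; omega),
    ← Finset.mul_sum, sum_range_pow_succ hc0 hc1]
  ring
end

section
/- Let Z be an ℝ^d-valued random variable that is regularly varying of order α with spectral measure ν = Σ_{i∈I} a_i δ_{ω_i} supported on finitely many distinct unit vectors ω_i, and let H be an ℝ^d-valued random variable defined on the same space with |H| ≤ C|Z|^{1−η} + C for some constants C>0, η∈(0,1). Then V = Z + H is also regularly varying of order α with the same spectral measure ν, and P(|V|>t) ∼ P(|Z|>t) as t→∞. -/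
/-!
Write `V = Z + H`. Since `‖H‖ ≤ C‖Z‖^(1-η) + C`, for every `ε > 0` we get `‖V - Z‖ ≤ ε‖Z‖` once
`‖Z‖` is large, so on the tail events `‖V‖` is within a factor `1 ± ε` of `‖Z‖` and the
directions `V/‖V‖`, `Z/‖Z‖` are `2ε`-close. The event `{‖V‖ > λt, V/‖V‖ ∈ S}` is therefore
squeezed between the events `{‖Z‖ > λt/(1 ∓ ε), Z/‖Z‖ ∈ T}`, with `T` the complement of the
closed `2ε`-thickening of `Sᶜ` below and the closed `2ε`-thickening of `S` above. As `ν` is a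
finite sum of atoms, for small `ε` both thickenings have the `ν`-mass of `S` resp. `Sᶜ` and
`ν`-null frontier, so the regular variation of `Z` applies on both sides, and `ε → 0` gives the
limit for `V` normalised by the tail of `Z`. Taking `S = univ` shows that the tails of `V` and
`Z` are equivalent, which allows renormalising by the tail of `V`.
-/

open MeasureTheory Filter Topology
open scoped ENNReal

/-- `Z` is regularly varying of order `α` with spectral measure `ν` (a measure on `ℝ^d`
supported on the unit sphere): for every `lam > 0` and every Borel set `S` with
`ν (frontier S) = 0`,
`μ(|Z| > lam t, Z/|Z| ∈ S)/μ(|Z| > t) → lam^(-α) ν S` as `t → ∞`. -/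
def RegVary {Ω : Type*} [MeasurableSpace Ω] (μ : Measure Ω) {d : ℕ}
    (Z : Ω → EuclideanSpace ℝ (Fin d)) (α : ℝ)
    (ν : Measure (EuclideanSpace ℝ (Fin d))) : Prop :=
  ∀ lam : ℝ, 0 < lam → ∀ S : Set (EuclideanSpace ℝ (Fin d)), MeasurableSet S →
    ν (frontier S) = 0 →
    Tendsto (fun t : ℝ => μ {x | lam * t < ‖Z x‖ ∧ ‖Z x‖⁻¹ • Z x ∈ S}
        / μ {x | t < ‖Z x‖}) atTop (𝓝 (ENNReal.ofReal (lam ^ (-α)) * ν S))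

open Metric Set

section ApproxSqueeze

variable {ι β α : Type*} [CompleteLinearOrder α] [TopologicalSpace α] [OrderTopology α]

theorem tendsto_of_approx_squeeze {k : Filter ι} [k.NeBot] {l : Filter β} [l.NeBot]
    {f : β → α} {g h : ι → β → α} {a b : ι → α} {L : α}
    (hg : ∀ᶠ i in k, Tendsto (g i) l (𝓝 (a i)) ∧ g i ≤ᶠ[l] f)
    (hh : ∀ᶠ i in k, Tendsto (h i) l (𝓝 (b i)) ∧ f ≤ᶠ[l] h i)
    (ha : Tendsto a k (𝓝 L)) (hb : Tendsto b k (𝓝 L)) : Tendsto f l (𝓝 L) := by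
  refine tendsto_of_le_liminf_of_limsup_le ?_ ?_
  · refine le_of_tendsto ha (hg.mono fun i hi => ?_)
    rw [← hi.1.liminf_eq]
    exact liminf_le_liminf hi.2
  · refine ge_of_tendsto hb (hh.mono fun i hi => ?_)
    rw [← hi.1.limsup_eq]
    exact limsup_le_limsup hi.2

end ApproxSqueeze

theorem tendsto_div_of_tendsto_div_of_tendsto_div_one {β : Type*} {l : Filter β}
    {f A B : β → ℝ≥0∞} {L : ℝ≥0∞} (hA₀ : ∀ t, A t ≠ 0) (hA : ∀ t, A t ≠ ∞)
    (hf : Tendsto (fun t => f t / A t) l (𝓝 L)) (hB : Tendsto (fun t => B t / A t) l (𝓝 1)) :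
    Tendsto (fun t => f t / B t) l (𝓝 L) := by
  have := ENNReal.Tendsto.div hf (Or.inr one_ne_zero) hB (Or.inl ENNReal.one_ne_top)
  rw [div_one] at this
  refine this.congr fun t => ?_
  rw [div_eq_mul_inv (f t), div_eq_mul_inv (B t), ENNReal.mul_div_mul_right _ _
    (ENNReal.inv_ne_zero.2 (hA t)) (ENNReal.inv_ne_top.2 (hA₀ t))]

theorem tendsto_ofReal_rpow_mul {ι : Type*} {k : Filter ι} {g : ι → ℝ} {lam : ℝ}
    (hg : Tendsto g k (𝓝 lam)) (hlam : 0 < lam) (α : ℝ) {c : ℝ≥0∞} (hc : c ≠ ∞) :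
    Tendsto (fun i => ENNReal.ofReal (g i ^ (-α)) * c) k
      (𝓝 (ENNReal.ofReal (lam ^ (-α)) * c)) :=
  ENNReal.Tendsto.mul_const ((ENNReal.continuous_ofReal.tendsto _).comp
    ((Real.continuousAt_rpow_const _ _ (Or.inl hlam.ne')).tendsto.comp hg)) (Or.inr hc)

theorem exists_mul_rpow_add_le_mul_max {C p ε : ℝ} (hC : 0 ≤ C) (hp₀ : 0 ≤ p) (hp₁ : p < 1)
    (hε : 0 < ε) : ∃ R, ∀ r, 0 ≤ r → C * r ^ p + C ≤ ε * max r R := by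
  have hdecay : Tendsto (fun r : ℝ => C * r ^ (-(1 - p)) + C * r ^ (-1 : ℝ)) atTop (𝓝 0) := by
    simpa using ((tendsto_rpow_neg_atTop (sub_pos.2 hp₁)).const_mul C).add
      ((tendsto_rpow_neg_atTop one_pos).const_mul C)
  obtain ⟨R, hR⟩ := eventually_atTop.1
    ((hdecay.eventually (gt_mem_nhds hε)).and (eventually_gt_atTop 0))
  have large : ∀ r, R ≤ r → C * r ^ p + C ≤ ε * r := by
    intro r hr
    obtain ⟨hlt, hpos⟩ := hR r hr
    have : C * r ^ p + C = r * (C * r ^ (-(1 - p)) + C * r ^ (-1 : ℝ)) := by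
      rw [neg_sub, Real.rpow_sub_one hpos.ne', Real.rpow_neg_one]
      field_simp
    rw [this, mul_comm ε]
    exact mul_le_mul_of_nonneg_left hlt.le hpos.le
  refine ⟨R, fun r hr => ?_⟩
  rcases le_total R r with hRr | hrR
  · exact (large r hRr).trans (by gcongr; exact le_max_left _ _)
  · calc C * r ^ p + C ≤ C * R ^ p + C := by gcongr
      _ ≤ ε * R := large R le_rfl
      _ ≤ ε * max r R := by gcongr; exact le_max_right _ _

section NormedGroup

variable {E : Type*} [NormedAddCommGroup E] {v z : E} {ε R s : ℝ}

theorem lt_one_add_mul_norm_of_lt_norm (h : ‖v - z‖ ≤ ε * max ‖z‖ R)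
    (hs : (1 + ε) * R ≤ s) (hsv : s < ‖v‖) : s < (1 + ε) * ‖z‖ ∧ ‖v - z‖ ≤ ε * ‖z‖ := by
  have htri := (abs_le.1 (abs_norm_sub_norm_le v z)).2
  have hzR : R ≤ ‖z‖ := by
    by_contra! hzR
    rw [max_eq_right hzR.le] at h
    nlinarith
  rw [max_eq_left hzR] at h
  exact ⟨by linarith, h⟩

theorem lt_norm_of_lt_one_sub_mul_norm (h : ‖v - z‖ ≤ ε * max ‖z‖ R) (hε : 0 ≤ ε)
    (hs : R ≤ s) (hsz : s < (1 - ε) * ‖z‖) : s < ‖v‖ ∧ ‖v - z‖ ≤ ε * ‖z‖ := by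
  have htri := (abs_le.1 (abs_norm_sub_norm_le v z)).1
  have hzR : R ≤ ‖z‖ := by nlinarith [norm_nonneg z]
  rw [max_eq_left hzR] at h
  exact ⟨by linarith, h⟩

variable [NormedSpace ℝ E]

theorem norm_inv_smul_sub_inv_smul_le (v : E) (hz : z ≠ 0) :
    ‖‖v‖⁻¹ • v - ‖z‖⁻¹ • z‖ ≤ 2 * ‖v - z‖ / ‖z‖ := by
  have hz' : 0 < ‖z‖ := norm_pos_iff.2 hz
  have radial : ‖(‖v‖⁻¹ - ‖z‖⁻¹) • v‖ ≤ ‖v - z‖ / ‖z‖ := by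
    rcases eq_or_ne v 0 with rfl | hv
    · simp only [smul_zero, norm_zero]; positivity
    have hv' : 0 < ‖v‖ := norm_pos_iff.2 hv
    calc ‖(‖v‖⁻¹ - ‖z‖⁻¹) • v‖ = |‖z‖ - ‖v‖| / ‖z‖ := by
          rw [norm_smul, Real.norm_eq_abs, inv_sub_inv hv'.ne' hz'.ne', abs_div,
            abs_mul, abs_of_pos hv', abs_of_pos hz']
          field_simp
      _ ≤ ‖v - z‖ / ‖z‖ := by
          gcongr
          rw [norm_sub_rev]
          exact abs_norm_sub_norm_le z v
  calc ‖‖v‖⁻¹ • v - ‖z‖⁻¹ • z‖ = ‖(‖v‖⁻¹ - ‖z‖⁻¹) • v + ‖z‖⁻¹ • (v - z)‖ := by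
        rw [sub_smul, smul_sub]; abel_nf
    _ ≤ ‖v - z‖ / ‖z‖ + ‖v - z‖ / ‖z‖ := by
        refine (norm_add_le _ _).trans (add_le_add radial (le_of_eq ?_))
        rw [norm_smul, norm_inv, norm_norm, inv_mul_eq_div]
    _ = 2 * ‖v - z‖ / ‖z‖ := by ring

theorem dist_inv_smul_le_of_norm_sub_le (h : ‖v - z‖ ≤ ε * ‖z‖) (hz : z ≠ 0) :
    dist (‖v‖⁻¹ • v) (‖z‖⁻¹ • z) ≤ 2 * ε := by
  rw [dist_eq_norm]
  refine (norm_inv_smul_sub_inv_smul_le v hz).trans ?_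
  rw [mul_div_assoc]
  gcongr
  rwa [div_le_iff₀ (norm_pos_iff.2 hz)]

end NormedGroup

section Tails

variable {Ω E : Type*} [MeasurableSpace Ω] {μ : Measure Ω} [NormedAddCommGroup E]
  [NormedSpace ℝ E] {Z V : Ω → E} {ε R lam : ℝ}

theorem eventually_measure_tail_le_cthickening
    (hVZ : ∀ᵐ x ∂μ, ‖V x - Z x‖ ≤ ε * max ‖Z x‖ R) (hε : 0 ≤ ε) (hlam : 0 < lam) (S : Set E) :
    ∀ᶠ t in atTop, μ {x | lam * t < ‖V x‖ ∧ ‖V x‖⁻¹ • V x ∈ S} ≤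
      μ {x | lam / (1 + ε) * t < ‖Z x‖ ∧ ‖Z x‖⁻¹ • Z x ∈ cthickening (2 * ε) S} := by
  filter_upwards [eventually_ge_atTop ((1 + ε) * R / lam), eventually_ge_atTop 0] with t hR ht
  refine measure_mono_ae (hVZ.mono fun x hx ⟨hV, hS⟩ => ?_)
  rw [div_le_iff₀ hlam] at hR
  obtain ⟨hlt, hnear⟩ := lt_one_add_mul_norm_of_lt_norm hx (by linarith) hV
  have hZ : Z x ≠ 0 := by
    rintro h0
    rw [h0, norm_zero, mul_zero] at hlt
    nlinarith
  refine ⟨by rwa [div_mul_eq_mul_div, div_lt_iff₀ (by linarith), mul_comm ‖Z x‖], ?_⟩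
  exact mem_cthickening_of_dist_le _ _ _ _ hS
    ((dist_comm _ _).le.trans (dist_inv_smul_le_of_norm_sub_le hnear hZ))

theorem eventually_measure_cthickening_compl_le_tail
    (hVZ : ∀ᵐ x ∂μ, ‖V x - Z x‖ ≤ ε * max ‖Z x‖ R) (hε : 0 ≤ ε) (hε₁ : ε < 1) (hlam : 0 < lam)
    (S : Set E) :
    ∀ᶠ t in atTop,
      μ {x | lam / (1 - ε) * t < ‖Z x‖ ∧ ‖Z x‖⁻¹ • Z x ∈ (cthickening (2 * ε) Sᶜ)ᶜ} ≤
        μ {x | lam * t < ‖V x‖ ∧ ‖V x‖⁻¹ • V x ∈ S} := by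
  filter_upwards [eventually_ge_atTop (R / lam), eventually_ge_atTop 0] with t hR ht
  refine measure_mono_ae (hVZ.mono fun x hx ⟨hZt, hS⟩ => ?_)
  rw [div_mul_eq_mul_div, div_lt_iff₀ (sub_pos.2 hε₁), mul_comm ‖Z x‖] at hZt
  rw [div_le_iff₀ hlam] at hR
  obtain ⟨hV, hnear⟩ := lt_norm_of_lt_one_sub_mul_norm hx hε (by linarith) hZt
  have hZ : Z x ≠ 0 := by
    rintro h0
    rw [h0, norm_zero, mul_zero] at hZt
    nlinarith
  refine ⟨hV, not_not.1 fun hSc => hS ?_⟩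
  exact mem_cthickening_of_dist_le _ _ _ _ hSc
    ((dist_comm _ _).le.trans (dist_inv_smul_le_of_norm_sub_le hnear hZ))

end Tails

section Thickening

variable {X : Type*} [PseudoMetricSpace X]

theorem eventually_mem_cthickening_iff_and_notMem_frontier {S : Set X} {p : X}
    (hp : p ∉ frontier S) :
    ∀ᶠ r in 𝓝 (0 : ℝ), (p ∈ cthickening r S ↔ p ∈ S) ∧ p ∉ frontier (cthickening r S) := by
  by_cases hcl : p ∈ closure S
  · have hint : p ∈ interior S := not_not.1 fun h => hp ⟨hcl, h⟩
    refine Eventually.of_forall fun r => ⟨iff_of_true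
      (self_subset_cthickening S (interior_subset hint)) (interior_subset hint), fun hfr => ?_⟩
    exact hfr.2 (interior_mono (self_subset_cthickening S) hint)
  · filter_upwards [eventually_notMem_cthickening_of_infEDist_pos hcl] with r hr
    exact ⟨iff_of_false hr fun h => hcl (subset_closure h),
      fun hfr => hr (isClosed_cthickening.frontier_subset hfr)⟩

variable [MeasurableSpace X] [OpensMeasurableSpace X] {I : Type*} [Finite I]

theorem eventually_sum_dirac_cthickening {c : I → ℝ≥0∞} {ω : I → X} {ν : Measure X}
    (hν : ν = Measure.sum fun i => c i • Measure.dirac (ω i)) {S : Set X} (hS : MeasurableSet S)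
    (hfr : ν (frontier S) = 0) :
    ∀ᶠ r in 𝓝 (0 : ℝ), ν (cthickening r S) = ν S ∧ ν (frontier (cthickening r S)) = 0 := by
  subst hν
  have hF := isClosed_frontier (s := S)
  rw [Measure.sum_apply _ hF.measurableSet, ENNReal.tsum_eq_zero] at hfr
  have atoms : ∀ᶠ r in 𝓝 (0 : ℝ), ∀ i, c i = 0 ∨
      ((ω i ∈ cthickening r S ↔ ω i ∈ S) ∧ ω i ∉ frontier (cthickening r S)) := by
    refine eventually_all.2 fun i => ?_
    have := hfr i
    simp only [Measure.smul_apply, Measure.dirac_apply' _ hF.measurableSet, smul_eq_mul,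
      mul_eq_zero, indicator_apply_eq_zero, Pi.one_apply, one_ne_zero, imp_false] at this
    rcases this with h | h
    · exact Eventually.of_forall fun _ => Or.inl h
    · exact (eventually_mem_cthickening_iff_and_notMem_frontier h).mono fun _ => Or.inr
  filter_upwards [atoms] with r hr
  have hT := isClosed_cthickening (δ := r) (E := S)
  simp only [Measure.sum_apply _ hT.measurableSet, Measure.sum_apply _ hS,
    Measure.sum_apply _ isClosed_frontier.measurableSet, Measure.smul_apply, smul_eq_mul,
    Measure.dirac_apply' _ hT.measurableSet, Measure.dirac_apply' _ hS,
    Measure.dirac_apply' _ isClosed_frontier.measurableSet]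
  refine ⟨tsum_congr fun i => ?_, ENNReal.tsum_eq_zero.2 fun i => ?_⟩ <;>
    rcases hr i with h | ⟨hmem, hnot⟩
  · simp [h]
  · by_cases hSi : ω i ∈ S
    · simp [hSi, hmem.2 hSi]
    · simp [hSi, mt hmem.1 hSi]
  · simp [h]
  · simp [hnot]

end Thickening

section RegularVariation

variable {Ω : Type*} [MeasurableSpace Ω] {μ : Measure Ω} {d : ℕ}
  {Z V : Ω → EuclideanSpace ℝ (Fin d)} {α : ℝ} {ν : Measure (EuclideanSpace ℝ (Fin d))}

theorem RegVary.measure_tail_ne_zero (hZ : RegVary μ Z α ν) (hν : ν univ ≠ 0) (t : ℝ) :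
    μ {x | t < ‖Z x‖} ≠ 0 := by
  intro h0
  have hlim := hZ 1 one_pos univ MeasurableSet.univ (by simp)
  have hzero : ∀ᶠ s in atTop,
      μ {x | 1 * s < ‖Z x‖ ∧ ‖Z x‖⁻¹ • Z x ∈ univ} / μ {x | s < ‖Z x‖} = 0 := by
    filter_upwards [eventually_ge_atTop t] with s hs
    rw [measure_mono_null (fun x hx => hs.trans_lt (by simpa using hx.1)) h0, ENNReal.zero_div]
  have := tendsto_nhds_unique (tendsto_const_nhds.congr' (hzero.mono fun _ h => h.symm)) hlim
  simp only [Real.one_rpow, ENNReal.ofReal_one, one_mul] at this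
  exact hν this.symm

theorem RegVary.tendsto_of_norm_sub_le_mul_max [IsFiniteMeasure ν] (hZ : RegVary μ Z α ν)
    (hν : ∀ S, MeasurableSet S → ν (frontier S) = 0 → ∀ᶠ r in 𝓝 (0 : ℝ),
      ν (cthickening r S) = ν S ∧ ν (frontier (cthickening r S)) = 0)
    (hVZ : ∀ ε > 0, ∃ R, ∀ᵐ x ∂μ, ‖V x - Z x‖ ≤ ε * max ‖Z x‖ R)
    {lam : ℝ} (hlam : 0 < lam) {S : Set (EuclideanSpace ℝ (Fin d))} (hS : MeasurableSet S)
    (hfr : ν (frontier S) = 0) :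
    Tendsto (fun t => μ {x | lam * t < ‖V x‖ ∧ ‖V x‖⁻¹ • V x ∈ S} / μ {x | t < ‖Z x‖}) atTop
      (𝓝 (ENNReal.ofReal (lam ^ (-α)) * ν S)) := by
  have hdouble : Tendsto (fun ε : ℝ => 2 * ε) (𝓝[>] 0) (𝓝 0) :=
    ((continuous_const_mul 2).tendsto' 0 0 (mul_zero 2)).mono_left nhdsWithin_le_nhds
  have hsmall : ∀ᶠ ε in 𝓝[>] (0 : ℝ), 0 < ε ∧ ε < 1 :=
    (eventually_mem_nhdsWithin (a := 0) (s := Ioi 0)).and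
      ((gt_mem_nhds one_pos).filter_mono nhdsWithin_le_nhds)
  have hfactor : ∀ c : ℝ, Tendsto (fun ε : ℝ => lam / (1 + c * ε)) (𝓝[>] 0) (𝓝 lam) := by
    intro c
    have : ContinuousAt (fun ε : ℝ => lam / (1 + c * ε)) 0 := by fun_prop (disch := simp)
    simpa using this.tendsto.mono_left nhdsWithin_le_nhds
  refine tendsto_of_approx_squeeze (k := 𝓝[>] (0 : ℝ))
    (g := fun ε t => μ {x | lam / (1 - ε) * t < ‖Z x‖ ∧
      ‖Z x‖⁻¹ • Z x ∈ (cthickening (2 * ε) Sᶜ)ᶜ} / μ {x | t < ‖Z x‖})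
    (h := fun ε t => μ {x | lam / (1 + ε) * t < ‖Z x‖ ∧
      ‖Z x‖⁻¹ • Z x ∈ cthickening (2 * ε) S} / μ {x | t < ‖Z x‖})
    ?_ ?_ (tendsto_ofReal_rpow_mul (by simpa [← sub_eq_add_neg] using hfactor (-1)) hlam α
      (measure_ne_top ν S))
    (tendsto_ofReal_rpow_mul (by simpa using hfactor 1) hlam α (measure_ne_top ν S))
  · filter_upwards [hsmall, hdouble.eventually (hν Sᶜ hS.compl (by rwa [frontier_compl]))]
      with ε ⟨hε, hε₁⟩ ⟨hthick, hthick_fr⟩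
    obtain ⟨R, hR⟩ := hVZ ε hε
    have hT : MeasurableSet (cthickening (2 * ε) Sᶜ) := isClosed_cthickening.measurableSet
    have hνT : ν (cthickening (2 * ε) Sᶜ)ᶜ = ν S := by
      rw [measure_compl hT (measure_ne_top _ _), hthick, measure_compl hS (measure_ne_top _ _),
        ENNReal.sub_sub_cancel (measure_ne_top _ _) (measure_mono (subset_univ _))]
    refine ⟨?_, ?_⟩
    · rw [← hνT]
      exact hZ _ (div_pos hlam (by linarith)) _ hT.compl (by rwa [frontier_compl])
    · filter_upwards [eventually_measure_cthickening_compl_le_tail hR hε.le hε₁ hlam S] with t ht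
      exact ENNReal.div_le_div_right ht _
  · filter_upwards [self_mem_nhdsWithin, hdouble.eventually (hν S hS hfr)]
      with ε (hε : 0 < ε) ⟨hthick, hthick_fr⟩
    obtain ⟨R, hR⟩ := hVZ ε hε
    refine ⟨?_, ?_⟩
    · rw [← hthick]
      exact hZ _ (div_pos hlam (by linarith)) _ isClosed_cthickening.measurableSet hthick_fr
    · filter_upwards [eventually_measure_tail_le_cthickening hR hε.le hlam S] with t ht
      exact ENNReal.div_le_div_right ht _

end RegularVariation

theorem stmt10_general {Ω : Type*} [MeasurableSpace Ω] (μ : Measure Ω) [IsProbabilityMeasure μ]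
    (d : ℕ) (α : ℝ)
    {I : Type*} [Fintype I]
    (a : I → ℝ) (ha : ∀ i, 0 < a i) (hsum : ∑ i, a i = 1)
    (ω : I → EuclideanSpace ℝ (Fin d))
    (ν : Measure (EuclideanSpace ℝ (Fin d)))
    (hν : ν = Measure.sum (fun i : I => ENNReal.ofReal (a i) • Measure.dirac (ω i)))
    (Z H : Ω → EuclideanSpace ℝ (Fin d))
    (hZ : RegVary μ Z α ν)
    (C η : ℝ) (hC : 0 < C) (hη : η ∈ Set.Ioo (0:ℝ) 1)
    (hH : ∀ᵐ x ∂μ, ‖H x‖ ≤ C * ‖Z x‖ ^ (1 - η) + C) :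
    RegVary μ (fun x => Z x + H x) α ν ∧
    Tendsto (fun t : ℝ => μ {x | t < ‖Z x + H x‖} / μ {x | t < ‖Z x‖})
      atTop (𝓝 1) := by
  have hν_univ : ν univ = 1 := by
    rw [hν, Measure.sum_apply _ MeasurableSet.univ, tsum_fintype]
    simp only [Measure.smul_apply, measure_univ, smul_eq_mul, mul_one]
    rw [← ENNReal.ofReal_sum_of_nonneg fun i _ => (ha i).le, hsum, ENNReal.ofReal_one]
  have : IsProbabilityMeasure ν := ⟨hν_univ⟩
  have hHZ : ∀ ε > 0, ∃ R, ∀ᵐ x ∂μ, ‖(Z x + H x) - Z x‖ ≤ ε * max ‖Z x‖ R := by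
    intro ε hε
    obtain ⟨R, hR⟩ := exists_mul_rpow_add_le_mul_max hC.le (sub_nonneg.2 hη.2.le)
      (sub_lt_self 1 hη.1) hε
    exact ⟨R, hH.mono fun x hx => by
      rw [add_sub_cancel_left]; exact hx.trans (hR _ (norm_nonneg _))⟩
  have hV := fun lam (hlam : 0 < lam) S (hS : MeasurableSet S) (hfr : ν (frontier S) = 0) =>
    hZ.tendsto_of_norm_sub_le_mul_max (fun _ => eventually_sum_dirac_cthickening hν) hHZ hlam hS
      hfr
  have hratio : Tendsto (fun t : ℝ => μ {x | t < ‖Z x + H x‖} / μ {x | t < ‖Z x‖})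
      atTop (𝓝 1) := by
    simpa [hν_univ] using hV 1 one_pos univ MeasurableSet.univ (by simp)
  refine ⟨fun lam hlam S hS hfr => ?_, hratio⟩
  exact tendsto_div_of_tendsto_div_of_tendsto_div_one
    (hZ.measure_tail_ne_zero (by simp [hν_univ])) (fun t => measure_ne_top μ _)
    (hV lam hlam S hS hfr) hratio

theorem stmt10 {Ω : Type*} [MeasurableSpace Ω] (μ : Measure Ω) [IsProbabilityMeasure μ]
    (d : ℕ) (α : ℝ) (hα : α ∈ Set.Ioo (0:ℝ) 2)
    {I : Type*} [Fintype I] [Nonempty I]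
    (a : I → ℝ) (ha : ∀ i, 0 < a i) (hsum : ∑ i, a i = 1)
    (ω : I → EuclideanSpace ℝ (Fin d)) (hω : ∀ i, ‖ω i‖ = 1)
    (hinj : Function.Injective ω)
    (ν : Measure (EuclideanSpace ℝ (Fin d)))
    (hν : ν = Measure.sum (fun i : I => ENNReal.ofReal (a i) • Measure.dirac (ω i)))
    (Z H : Ω → EuclideanSpace ℝ (Fin d))
    (hZmeas : Measurable Z) (hHmeas : Measurable H)
    (hZ : RegVary μ Z α ν)
    (C η : ℝ) (hC : 0 < C) (hη : η ∈ Set.Ioo (0:ℝ) 1)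
    (hH : ∀ᵐ x ∂μ, ‖H x‖ ≤ C * ‖Z x‖ ^ (1 - η) + C) :
    RegVary μ (fun x => Z x + H x) α ν ∧
    Tendsto (fun t : ℝ => μ {x | t < ‖Z x + H x‖} / μ {x | t < ‖Z x‖})
      atTop (𝓝 1) :=
  stmt10_general μ d α a ha hsum ω ν hν Z H hZ C η hC hη hH
end

section
/- For the tripling map T(x)=3x mod 1 and X=[0,1]∖([1/9,2/9]∪[1/3,4/9]), the first return time R to X satisfies: R∈L^p(μ_X) for every p<∞ (indeed μ_X(R>n) decays exponentially in n), since points with long return times lie, after one iterate, in cylinders of the form [0(01)^n]∪[1(10)^n]∪[2(01)^n]∪[2(10)^n] whose Lebesgue measure decays like 3^{−2n}. -/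
/-!
If `n + 1 < R x`, then the first `n + 1` iterates of `T x` all lie in the hole
`[0, 1) \ X ⊆ [0, 2/3)`. On each third `[k/3, (k+1)/3)` the map `T` is `y ↦ 3y - k`, so the
part of `T⁻¹' s` in one branch has Lebesgue measure `|s ∩ [0, 1)| / 3`. The hole meets only two
of the three branches, hence the points whose first `m + 1` iterates stay in it form a set of
measure at most `(2/3)^(m+1)`. This geometric tail makes `∑ nᵖ μ_X(R = n)` converge for every `p`.
-/

open Set MeasureTheory
open scoped ENNReal

/-- The tripling map `T x = 3x mod 1`. -/
noncomputable def triplingT : ℝ → ℝ := fun x => Int.fract (3 * x)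

lemma triplingT_mem_Ico (x : ℝ) : triplingT x ∈ Ico (0 : ℝ) 1 :=
  ⟨Int.fract_nonneg _, Int.fract_lt_one _⟩

lemma measurable_triplingT : Measurable triplingT :=
  measurable_fract.comp (measurable_const.mul measurable_id)

lemma triplingT_eq_of_mem_Ico {k : ℤ} {y : ℝ} (hy : y ∈ Ico (k / 3 : ℝ) ((k + 1) / 3)) :
    triplingT y = 3 * y - k := by
  have hfloor : ⌊3 * y⌋ = k := Int.floor_eq_iff.2 ⟨by linarith [hy.1], by linarith [hy.2]⟩
  rw [triplingT, Int.fract, hfloor]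

lemma Ico_inter_preimage_triplingT (k : ℤ) (s : Set ℝ) :
    Ico (k / 3 : ℝ) ((k + 1) / 3) ∩ triplingT ⁻¹' s =
      (fun y : ℝ => 3 * y - k) ⁻¹' (s ∩ Ico (0 : ℝ) 1) := by
  ext y
  have hbranch : y ∈ Ico (k / 3 : ℝ) ((k + 1) / 3) ↔ 3 * y - k ∈ Ico (0 : ℝ) 1 := by
    simp only [mem_Ico]
    constructor <;> rintro ⟨h₁, h₂⟩ <;> constructor <;> linarith
  simp only [mem_inter_iff, mem_preimage, ← hbranch]
  constructor
  · rintro ⟨hy, hs⟩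
    exact ⟨triplingT_eq_of_mem_Ico hy ▸ hs, hy⟩
  · rintro ⟨hs, hy⟩
    exact ⟨hy, (triplingT_eq_of_mem_Ico hy).symm ▸ hs⟩

lemma volume_Ico_inter_preimage_triplingT (k : ℤ) (s : Set ℝ) :
    volume (Ico (k / 3 : ℝ) ((k + 1) / 3) ∩ triplingT ⁻¹' s) =
      ENNReal.ofReal (1 / 3) * volume (s ∩ Ico 0 1) := by
  have hcomp : (fun y : ℝ => 3 * y - k) ⁻¹' (s ∩ Ico 0 1) =
      (3 * ·) ⁻¹' ((· + (-k : ℝ)) ⁻¹' (s ∩ Ico 0 1)) := by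
    ext y; simp only [mem_preimage, sub_eq_add_neg]
  rw [Ico_inter_preimage_triplingT, hcomp, Real.volume_preimage_mul_left three_ne_zero,
    measure_preimage_add_right]
  norm_num

lemma volume_Ico_zero_inter_preimage_triplingT_le (k : ℕ) (s : Set ℝ) :
    volume (Ico 0 (k / 3 : ℝ) ∩ triplingT ⁻¹' s) ≤
      ENNReal.ofReal (k / 3) * volume (s ∩ Ico 0 1) := by
  induction k with
  | zero => simp
  | succ k ih =>
    have hsplit : Ico 0 ((k + 1 : ℕ) / 3 : ℝ) =
        Ico 0 (k / 3 : ℝ) ∪ Ico (((k : ℤ) : ℝ) / 3) (((k : ℤ) + 1) / 3) := by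
      push_cast
      exact (Ico_union_Ico_eq_Ico (by positivity) (by linarith)).symm
    calc volume (Ico 0 ((k + 1 : ℕ) / 3 : ℝ) ∩ triplingT ⁻¹' s)
        ≤ volume (Ico 0 (k / 3 : ℝ) ∩ triplingT ⁻¹' s) +
            volume (Ico (((k : ℤ) : ℝ) / 3) (((k : ℤ) + 1) / 3) ∩ triplingT ⁻¹' s) := by
          rw [hsplit, union_inter_distrib_right]
          exact measure_union_le _ _
      _ ≤ ENNReal.ofReal (k / 3) * volume (s ∩ Ico 0 1) +
            ENNReal.ofReal (1 / 3) * volume (s ∩ Ico 0 1) :=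
          add_le_add ih (volume_Ico_inter_preimage_triplingT k s).le
      _ = ENNReal.ofReal ((k + 1 : ℕ) / 3) * volume (s ∩ Ico 0 1) := by
          rw [← add_mul, ← ENNReal.ofReal_add (by positivity) (by norm_num)]
          push_cast; ring_nf

lemma volume_setOf_forall_iterate_triplingT_mem_le {H : Set ℝ} (hH : H ⊆ Ico 0 (2 / 3))
    (m : ℕ) :
    volume {y | ∀ j ≤ m, triplingT^[j] y ∈ H} ≤ ENNReal.ofReal ((2 / 3) ^ (m + 1)) := by
  induction m with
  | zero =>
    calc volume {y | ∀ j ≤ 0, triplingT^[j] y ∈ H} ≤ volume (Ico (0 : ℝ) (2 / 3)) :=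
          measure_mono fun y hy => hH (hy 0 le_rfl)
      _ = ENNReal.ofReal ((2 / 3) ^ (0 + 1)) := by simp [Real.volume_Ico]
  | succ m ih =>
    set A := {y | ∀ j ≤ m, triplingT^[j] y ∈ H}
    have hsub : {y | ∀ j ≤ m + 1, triplingT^[j] y ∈ H} ⊆
        Ico 0 ((2 : ℕ) / 3 : ℝ) ∩ triplingT ⁻¹' A := fun y hy =>
      ⟨by simpa using hH (hy 0 (Nat.zero_le _)), fun j hj => hy (j + 1) (by omega)⟩
    calc volume {y | ∀ j ≤ m + 1, triplingT^[j] y ∈ H}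
        ≤ ENNReal.ofReal ((2 : ℕ) / 3) * volume (A ∩ Ico 0 1) :=
          (measure_mono hsub).trans (volume_Ico_zero_inter_preimage_triplingT_le 2 A)
      _ ≤ ENNReal.ofReal (2 / 3) * ENNReal.ofReal ((2 / 3) ^ (m + 1)) := by
          gcongr
          · norm_num
          · exact (measure_mono inter_subset_left).trans ih
      _ = ENNReal.ofReal ((2 / 3) ^ (m + 1 + 1)) := by
          rw [← ENNReal.ofReal_mul (by norm_num), pow_succ' _ (m + 1)]

/-- Points that never return to `X` get the junk value `sInf ∅ = 0`. -/
noncomputable def returnTime (X : Set ℝ) (x : ℝ) : ℕ :=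
  sInf {n : ℕ | 1 ≤ n ∧ triplingT^[n] x ∈ X}

section ReturnTime

variable {X : Set ℝ}

lemma returnTime_le_iff {x : ℝ} {n : ℕ} :
    returnTime X x ≤ n ↔
      (∀ k, ¬(1 ≤ k ∧ triplingT^[k] x ∈ X)) ∨ ∃ k ≤ n, 1 ≤ k ∧ triplingT^[k] x ∈ X := by
  rcases eq_empty_or_nonempty {k : ℕ | 1 ≤ k ∧ triplingT^[k] x ∈ X} with hempty | hne
  · exact iff_of_true (by simp [returnTime, hempty]) (Or.inl fun k hk => hempty.subset hk)
  · obtain ⟨k, hk⟩ := hne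
    constructor
    · exact fun h => Or.inr ⟨_, h, Nat.sInf_mem ⟨k, hk⟩⟩
    · rintro (h | ⟨j, hjn, hj⟩)
      · exact absurd hk (h k)
      · exact (Nat.sInf_le hj).trans hjn

lemma measurable_returnTime (hX : MeasurableSet X) : Measurable (returnTime X) := by
  have hiter (k : ℕ) : MeasurableSet {x | triplingT^[k] x ∈ X} :=
    measurable_triplingT.iterate k hX
  refine measurable_of_Iic fun n => ?_
  simp only [preimage, mem_Iic, returnTime_le_iff]
  measurability

lemma iterate_triplingT_mem_Ico_diff_of_lt_returnTime {x : ℝ} {n : ℕ}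
    (h : n + 1 < returnTime X x) {j : ℕ} (hj : j ≤ n) :
    triplingT^[j] (triplingT x) ∈ Ico 0 1 \ X := by
  have hnot : triplingT^[j + 1] x ∉ X := fun hx =>
    Nat.notMem_of_lt_sInf (s := {k | 1 ≤ k ∧ triplingT^[k] x ∈ X})
      (by unfold returnTime at h; omega) ⟨j.succ_pos, hx⟩
  rw [← Function.iterate_succ_apply]
  exact ⟨Function.iterate_succ_apply' .. ▸ triplingT_mem_Ico _, hnot⟩

lemma volume_setOf_lt_returnTime_inter_le (hX : X ⊆ Icc 0 1)
    (hgap : Ico 0 1 \ X ⊆ Ico 0 (2 / 3)) (n : ℕ) :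
    volume ({x | n < returnTime X x} ∩ X) ≤ ENNReal.ofReal ((2 / 3) ^ n) := by
  cases n with
  | zero =>
    calc volume ({x | 0 < returnTime X x} ∩ X) ≤ volume (Icc (0 : ℝ) 1) :=
          measure_mono (inter_subset_right.trans hX)
      _ = ENNReal.ofReal ((2 / 3) ^ 0) := by simp [Real.volume_Icc]
  | succ n =>
    set A := {y | ∀ j ≤ n, triplingT^[j] y ∈ Ico 0 1 \ X}
    have hsub : {x | n + 1 < returnTime X x} ∩ X ⊆
        (Ico 0 ((3 : ℕ) / 3 : ℝ) ∩ triplingT ⁻¹' A) ∪ {1} := by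
      rintro x ⟨hR, hxX⟩
      rcases (hX hxX).2.lt_or_eq with hx1 | rfl
      · exact Or.inl ⟨by norm_num [(hX hxX).1, hx1],
          fun j hj => iterate_triplingT_mem_Ico_diff_of_lt_returnTime hR hj⟩
      · exact Or.inr rfl
    calc volume ({x | n + 1 < returnTime X x} ∩ X)
        ≤ volume (Ico 0 ((3 : ℕ) / 3 : ℝ) ∩ triplingT ⁻¹' A) + volume {(1 : ℝ)} :=
          (measure_mono hsub).trans (measure_union_le _ _)
      _ ≤ ENNReal.ofReal ((3 : ℕ) / 3) * volume (A ∩ Ico 0 1) := by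
          rw [measure_singleton, add_zero]
          exact volume_Ico_zero_inter_preimage_triplingT_le 3 A
      _ = volume (A ∩ Ico 0 1) := by norm_num
      _ ≤ volume A := measure_mono inter_subset_left
      _ ≤ ENNReal.ofReal ((2 / 3) ^ (n + 1)) :=
          volume_setOf_forall_iterate_triplingT_mem_le hgap n

end ReturnTime

lemma summable_rpow_mul_geometric {q θ : ℝ} (hq : 0 < q) (hθ₀ : 0 ≤ θ) (hθ₁ : θ < 1) :
    Summable fun n : ℕ => (n : ℝ) ^ q * θ ^ n := by
  refine (summable_pow_mul_geometric_of_norm_lt_one ⌈q⌉₊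
    (by rwa [Real.norm_of_nonneg hθ₀])).of_nonneg_of_le (fun n => by positivity) fun n => ?_
  gcongr
  rcases n.eq_zero_or_pos with rfl | hn
  · simp [Real.zero_rpow hq.ne']
  · rw [← Real.rpow_natCast]
    exact Real.rpow_le_rpow_of_exponent_le (by exact_mod_cast hn) (Nat.le_ceil q)

lemma memLp_natCast_of_measure_lt_le {α : Type*} [MeasurableSpace α] {μ : Measure α}
    {f : α → ℕ} (hf : Measurable f) {C θ : ℝ} (hθ₀ : 0 < θ) (hθ₁ : θ < 1)
    (htail : ∀ n : ℕ, μ {x | n < f x} ≤ ENNReal.ofReal (C * θ ^ n))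
    {p : ℝ≥0∞} (hp : p ≠ ∞) :
    MemLp (fun x => (f x : ℝ)) p μ := by
  have hmeas : AEStronglyMeasurable (fun x => (f x : ℝ)) μ :=
    (measurable_from_top.comp hf).aestronglyMeasurable
  rcases eq_or_ne p 0 with rfl | hp₀
  · exact memLp_zero_iff_aestronglyMeasurable.2 hmeas
  refine ⟨hmeas, (eLpNorm_lt_top_iff_lintegral_rpow_enorm_lt_top hp₀ hp).2 ?_⟩
  have hq : 0 < p.toReal := ENNReal.toReal_pos hp₀ hp
  have hterm (n : ℕ) : (n : ℝ≥0∞) ^ p.toReal * μ (f ⁻¹' {n}) ≤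
      ENNReal.ofReal (|C| / θ * ((n : ℝ) ^ p.toReal * θ ^ n)) := by
    rcases n with _ | n
    · simp [ENNReal.zero_rpow_of_pos hq]
    have hlevel : μ (f ⁻¹' {n + 1}) ≤ ENNReal.ofReal (|C| / θ * θ ^ (n + 1)) :=
      calc μ (f ⁻¹' {n + 1}) ≤ μ {x | n < f x} :=
            measure_mono fun x (hx : f x = n + 1) => show n < f x by omega
        _ ≤ ENNReal.ofReal (C * θ ^ n) := htail n
        _ ≤ ENNReal.ofReal (|C| * θ ^ n) := by gcongr; exact le_abs_self C
        _ = ENNReal.ofReal (|C| / θ * θ ^ (n + 1)) := by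
            congr 1; field_simp; ring
    rw [mul_left_comm, ENNReal.ofReal_mul (by positivity), ← ENNReal.ofReal_rpow_of_nonneg
      (by positivity) hq.le, ENNReal.ofReal_natCast]
    gcongr
  calc ∫⁻ x, ‖(f x : ℝ)‖ₑ ^ p.toReal ∂μ
      = ∫⁻ n : ℕ, (n : ℝ≥0∞) ^ p.toReal ∂(μ.map f) := by
        rw [lintegral_map (by measurability) hf]
        simp
    _ = ∑' n : ℕ, (n : ℝ≥0∞) ^ p.toReal * μ (f ⁻¹' {n}) := by
        rw [lintegral_countable']
        simp only [Measure.map_apply hf (measurableSet_singleton _)]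
    _ ≤ ∑' n : ℕ, ENNReal.ofReal (|C| / θ * ((n : ℝ) ^ p.toReal * θ ^ n)) :=
        ENNReal.tsum_le_tsum hterm
    _ = ENNReal.ofReal (∑' n : ℕ, |C| / θ * ((n : ℝ) ^ p.toReal * θ ^ n)) :=
        (ENNReal.ofReal_tsum_of_nonneg (fun n => by positivity)
          ((summable_rpow_mul_geometric hq hθ₀.le hθ₁).mul_left _)).symm
    _ < ∞ := ENNReal.ofReal_lt_top

theorem stmt16 (X : Set ℝ)
    (hX : X = Set.Icc (0:ℝ) 1 \ (Set.Icc (1/9:ℝ) (2/9) ∪ Set.Icc (1/3:ℝ) (4/9)))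
    (R : ℝ → ℕ) (hR : ∀ x, R x = sInf {n : ℕ | 1 ≤ n ∧ triplingT^[n] x ∈ X})
    (μX : Measure ℝ) (hμ : μX = ((9:ℝ≥0∞)/7) • volume.restrict X) :
    (∃ C > 0, ∃ θ ∈ Set.Ioo (0:ℝ) 1, ∀ n : ℕ,
      μX {x | n < R x} ≤ ENNReal.ofReal (C * θ ^ n)) ∧
    (∀ p : ℝ, 1 ≤ p → MemLp (fun x => (R x : ℝ)) (ENNReal.ofReal p) μX) := by
  obtain rfl : R = returnTime X := funext hR
  have hXm : MeasurableSet X := hX ▸ by measurability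
  have hX01 : X ⊆ Icc 0 1 := hX ▸ sdiff_subset
  have hgap : Ico 0 1 \ X ⊆ Ico 0 (2 / 3) := by
    rintro y ⟨hy, hyX⟩
    have hyH : y ∈ Icc (1 / 9 : ℝ) (2 / 9) ∪ Icc (1 / 3 : ℝ) (4 / 9) := by
      by_contra h
      exact hyX (hX ▸ ⟨Ico_subset_Icc_self hy, h⟩)
    refine ⟨hy.1, ?_⟩
    rcases hyH with h | h <;> linarith [h.2]
  have htail (n : ℕ) : μX {x | n < returnTime X x} ≤ ENNReal.ofReal (2 * (2 / 3) ^ n) := by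
    rw [hμ, Measure.smul_apply, smul_eq_mul, Measure.restrict_apply' hXm,
      ENNReal.ofReal_mul zero_le_two, ENNReal.ofReal_ofNat]
    gcongr
    · exact ENNReal.div_le_of_le_mul (by norm_num)
    · exact volume_setOf_lt_returnTime_inter_le hX01 hgap n
  exact ⟨⟨2, two_pos, 2 / 3, ⟨by norm_num, by norm_num⟩, htail⟩, fun p _ =>
    memLp_natCast_of_measure_lt_le (measurable_returnTime hXm) (by norm_num) (by norm_num) htail
      ENNReal.ofReal_ne_top⟩
end
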